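/- Let k₀, k₁ ∈ ℂ₋ (lower half-plane) with |k₁| ≥ |k₀| and Re(k₁²) ≤ Re(k₀²). Set S(k) = ((k - k₁)(k + conj k₁))/((k - k₀)(k + conj k₀)). Then |S(k)| ≥ 1 for every real k. -/

import Mathlib

/-!
On the real line `x + conj k = conj (x + k)`, so `|S x| = |x² - k₁²| / |x² - k₀²|`, and
`|x² - k²|² = x⁴ - 2 x² Re k² + |k|⁴` is monotone in the data exactly as the hypotheses say.
The denominator does not vanish because `k₀` is not real.
-/

open ComplexConjugate

namespace Complex

lemma norm_ofReal_sub_mul_add_conj (x : ℝ) (k : ℂ) :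
    ‖(x - k) * (x + conj k)‖ = ‖(x : ℂ) ^ 2 - k ^ 2‖ := by
  have hconj : (x : ℂ) + conj k = conj ((x : ℂ) + k) := by simp
  rw [hconj, norm_mul, norm_conj, ← norm_mul]
  ring_nf

lemma normSq_ofReal_sq_sub_sq (x : ℝ) (k : ℂ) :
    normSq ((x : ℂ) ^ 2 - k ^ 2) = x ^ 4 - 2 * x ^ 2 * (k ^ 2).re + ‖k‖ ^ 4 := by
  have hk : ‖k‖ ^ 4 = (k ^ 2).re ^ 2 + (k ^ 2).im ^ 2 := by
    rw [show ‖k‖ ^ 4 = ‖k ^ 2‖ ^ 2 by rw [norm_pow]; ring, Complex.sq_norm, normSq_apply]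
    ring
  rw [hk, normSq_apply]
  simp only [sub_re, sub_im, ← ofReal_pow, ofReal_re, ofReal_im]
  ring

lemma ofReal_sq_sub_sq_ne_zero (x : ℝ) {k : ℂ} (hk : k.im ≠ 0) :
    (x : ℂ) ^ 2 - k ^ 2 ≠ 0 := by
  rw [sq_sub_sq]
  refine mul_ne_zero (fun h ↦ hk ?_) (fun h ↦ hk ?_) <;>
    simpa using congrArg im h

lemma norm_ofReal_sq_sub_sq_le (x : ℝ) {k₀ k₁ : ℂ} (habs : ‖k₀‖ ≤ ‖k₁‖)
    (hre : (k₁ ^ 2).re ≤ (k₀ ^ 2).re) :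
    ‖(x : ℂ) ^ 2 - k₀ ^ 2‖ ≤ ‖(x : ℂ) ^ 2 - k₁ ^ 2‖ := by
  rw [← sq_le_sq₀ (norm_nonneg _) (norm_nonneg _), Complex.sq_norm, Complex.sq_norm,
    normSq_ofReal_sq_sub_sq, normSq_ofReal_sq_sub_sq]
  have hpow : ‖k₀‖ ^ 4 ≤ ‖k₁‖ ^ 4 := pow_le_pow_left₀ (norm_nonneg _) habs 4
  nlinarith [sq_nonneg x]

end Complex

theorem stmt7_general (k₀ k₁ : ℂ) (h₀ : k₀.im < 0)
    (habs : ‖k₀‖ ≤ ‖k₁‖)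
    (hre : (k₁ ^ 2).re ≤ (k₀ ^ 2).re)
    (S : ℂ → ℂ)
    (hS : S = fun k => ((k - k₁) * (k + starRingEnd ℂ k₁)) /
      ((k - k₀) * (k + starRingEnd ℂ k₀))) :
    ∀ x : ℝ, 1 ≤ ‖S x‖ := by
  intro x
  have hden : 0 < ‖(x : ℂ) ^ 2 - k₀ ^ 2‖ :=
    norm_pos_iff.mpr (Complex.ofReal_sq_sub_sq_ne_zero x h₀.ne)
  rw [hS, norm_div, Complex.norm_ofReal_sub_mul_add_conj,
    Complex.norm_ofReal_sub_mul_add_conj, one_le_div hden]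
  exact Complex.norm_ofReal_sq_sub_sq_le x habs hre

/-- For `k₀, k₁` in the lower half-plane with `|k₁| ≥ |k₀|` and
`Re k₁² ≤ Re k₀²`, the function
`S k = (k - k₁)(k + conj k₁)/((k - k₀)(k + conj k₀))` satisfies `|S| ≥ 1` on `ℝ`. -/
theorem stmt7 (k₀ k₁ : ℂ) (h₀ : k₀.im < 0) (h₁ : k₁.im < 0)
    (habs : ‖k₀‖ ≤ ‖k₁‖)
    (hre : (k₁ ^ 2).re ≤ (k₀ ^ 2).re)
    (S : ℂ → ℂ)
    (hS : S = fun k => ((k - k₁) * (k + starRingEnd ℂ k₁)) /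
      ((k - k₀) * (k + starRingEnd ℂ k₀))) :
    ∀ x : ℝ, 1 ≤ ‖S x‖ :=
  stmt7_general k₀ k₁ h₀ habs hre S hS
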